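/- arXiv:2202.10766 — 2 statements merged into one kernel-verified Lean document; each statement's English description precedes it below -/
import Mathlib

section
/- Let λ_X be an injective function from the database D into the variable set X, and consider the semiring N^∞⟦X⟧ of formal power series over X with coefficients in N∪{∞}. Then (i) a monomial occurs (with nonzero coefficient) in AT(Σ,D,N^∞⟦X⟧,λ_X,α) if and only if it occurs in AM(Σ,D,N^∞⟦X⟧,λ_X,α); and (ii) SAM(Σ,D,N^∞⟦X⟧,λ_X,α) is exactly the series obtained from AT(Σ,D,N^∞⟦X⟧,λ_X,α) by replacing every nonzero coefficient by 1. -/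
attribute [local instance] Classical.propDecidable

namespace Datalog

/-- Terms are built from constants and variables. -/
inductive Term (C V : Type) : Type
  | const : C → Term C V
  | var : V → Term C V

/-- An atom over predicates `P` with arguments of type `τ`. -/
structure Atom (P τ : Type) : Type where
  pred : P
  args : List τ

/-- A fact (ground atom) has constants as arguments. -/
abbrev Fact (P C : Type) := Atom P C

/-- Substitution of a variable assignment in a term. -/
def Term.subst {C : Type} {n : ℕ} (σ : Fin n → C) : Term C (Fin n) → C
  | Term.const c => c
  | Term.var v => σ v

/-- Substitution of a variable assignment in an atom, producing a fact. -/
def Atom.subst {P C : Type} {n : ℕ} (σ : Fin n → C) (a : Atom P (Term C (Fin n))) : Fact P C :=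
  ⟨a.pred, a.args.map (Term.subst σ)⟩

/-- Renaming of predicates in an atom. -/
def Atom.mapPred {P Q τ : Type} (f : P → Q) (a : Atom P τ) : Atom Q τ := ⟨f a.pred, a.args⟩

/-- Turn a fact into a (ground) rule atom. -/
def Atom.toRuleAtom {P C : Type} (n : ℕ) (a : Fact P C) : Atom P (Term C (Fin n)) :=
  ⟨a.pred, a.args.map Term.const⟩

/-- A (normalized) Datalog rule `φ(x⃗,y⃗) → H(x⃗)`: the body is a conjunction of atoms over
variables `x⃗ ∪ y⃗` (every variable of the rule occurs in the body), the head a single atom. -/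
structure Rule (P C : Type) : Type where
  nvars : ℕ
  nbody : ℕ
  body : Fin nbody → Atom P (Term C (Fin nvars))
  head : Atom P (Term C (Fin nvars))
  vars_in_body : ∀ v : Fin nvars, ∃ i : Fin nbody, Term.var v ∈ (body i).args

variable {P C K : Type}

/-- A set of facts is closed under the rules of a program. -/
def ClosedUnder (prog : Set (Rule P C)) (I : Set (Fact P C)) : Prop :=
  ∀ r ∈ prog, ∀ σ : Fin r.nvars → C,
    (∀ i, (r.body i).subst σ ∈ I) → r.head.subst σ ∈ I

/-- `Σ, D ⊨ α` : the fact `α` belongs to every set of facts containing `D`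
and closed under the rules of `Σ`. -/
def Entails (prog : Set (Rule P C)) (D : Set (Fact P C)) (a : Fact P C) : Prop :=
  ∀ I : Set (Fact P C), D ⊆ I → ClosedUnder prog I → a ∈ I

/-- Derivation trees of a fact w.r.t. a program and a database: leaves are labeled by facts of
`D`; an inner node is labeled by a rule `r ∈ Σ` together with a homomorphism `σ`, its children
corresponding bijectively to the body atoms of `r`, and derives the fact `σ(head r)`. -/
inductive DTree {P C : Type} (prog : Set (Rule P C)) (D : Set (Fact P C)) : Fact P C → Type
  | leaf (a : Fact P C) (ha : a ∈ D) : DTree prog D a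
  | node (r : Rule P C) (hr : r ∈ prog) (σ : Fin r.nvars → C)
      (children : ∀ i : Fin r.nbody, DTree prog D ((r.body i).subst σ)) :
      DTree prog D (r.head.subst σ)

namespace DTree

variable {prog : Set (Rule P C)} {D : Set (Fact P C)}

/-- `Λ(t)`: the product of the annotations of the leaves of `t`. -/
def weight [CommSemiring K] (lam : Fact P C → K) : ∀ {a : Fact P C}, DTree prog D a → K
  | _, .leaf a _ => lam a
  | _, .node r _ _ ch => ∏ i : Fin r.nbody, weight lam (ch i)

/-- The depth of a derivation tree. -/
def depth : ∀ {a : Fact P C}, DTree prog D a → ℕ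
  | _, .leaf _ _ => 0
  | _, .node r _ _ ch => (Finset.univ.sup fun i : Fin r.nbody => depth (ch i)) + 1

/-- A derivation tree of `a` is of minimal depth if no derivation tree of `a` is of
smaller depth. -/
def minimalDepth {a : Fact P C} (t : DTree prog D a) : Prop :=
  ∀ t' : DTree prog D a, t.depth ≤ t'.depth

/-- A derivation tree is hereditary minimal-depth if every subtree rooted at an inner node
is a minimal-depth derivation tree of the fact it derives. -/
def hereditaryMinimal : ∀ {a : Fact P C}, DTree prog D a → Prop
  | _, .leaf _ _ => True
  | _, .node r hr σ ch =>
      minimalDepth (.node r hr σ ch) ∧ ∀ i, hereditaryMinimal (ch i)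

/-- `t.avoid s` : no fact labeling a node of `t` belongs to `s`, nor is repeated along a
root-to-leaf path. -/
def avoid : Set (Fact P C) → ∀ {a : Fact P C}, DTree prog D a → Prop
  | s, _, .leaf a _ => a ∉ s
  | s, _, .node r _ σ ch =>
      r.head.subst σ ∉ s ∧ ∀ i, avoid (insert (r.head.subst σ) s) (ch i)

/-- A derivation tree is non-recursive if it does not contain two nodes labeled with the same
fact such that one is a descendant of the other. -/
def nonRecursive {a : Fact P C} (t : DTree prog D a) : Prop := t.avoid ∅

/-- `t.hasLeaf x` : `x` labels some leaf of `t`. -/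
def hasLeaf (x : Fact P C) : ∀ {a : Fact P C}, DTree prog D a → Prop
  | _, .leaf a _ => a = x
  | _, .node _ _ _ ch => ∃ i, hasLeaf x (ch i)

end DTree

/-- The finite partial sums of `f` over the set `S`. -/
def partialSums {T : Type} [AddCommMonoid K] (S : Set T) (f : T → K) : Set K :=
  { x | ∃ F : Finset T, ↑F ⊆ S ∧ x = ∑ t ∈ F, f t }

/-- The (possibly infinite) sum of `f` over `S`, i.e. the least upper bound of the finite
partial sums (junk value `0` if no least upper bound exists). -/
noncomputable def setSum {T : Type} [AddCommMonoid K] [PartialOrder K]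
    (S : Set T) (f : T → K) : K :=
  if h : ∃ s, IsLUB (partialSums S f) s then h.choose else 0

/-- The greatest lower bound of a set of semiring elements (junk value `0` if none exists). -/
noncomputable def setInf [Zero K] [PartialOrder K] (S : Set K) : K :=
  if h : ∃ z, IsGLB S z then h.choose else 0

/-- A commutative ω-continuous semiring: the natural order `a ≤ b ↔ ∃ c, a + c = b` is a
partial order, every ω-chain has a least upper bound, and `+` and `×` preserve these
least upper bounds. -/
class OmegaCommSemiring (K : Type) extends CommSemiring K, PartialOrder K where
  le_iff_exists_add : ∀ a b : K, a ≤ b ↔ ∃ c, a + c = b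
  chain_lub : ∀ f : ℕ → K, Monotone f → ∃ s, IsLUB (Set.range f) s
  add_lub : ∀ (f : ℕ → K) (a s : K), Monotone f → IsLUB (Set.range f) s →
    IsLUB (Set.range fun n => a + f n) (a + s)
  mul_lub : ∀ (f : ℕ → K) (a s : K), Monotone f → IsLUB (Set.range f) s →
    IsLUB (Set.range fun n => a * f n) (a * s)

/-- A positive semiring: a product is zero iff one factor is, a sum is zero iff both
summands are. -/
def PositiveSemiring (K : Type) [CommSemiring K] : Prop :=
  (∀ a b : K, a * b = 0 ↔ a = 0 ∨ b = 0) ∧ (∀ a b : K, a + b = 0 ↔ a = 0 ∧ b = 0)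

/-- An annotated database: a set of facts together with an annotation function assigning a
semiring element to every fact (`0` outside the database). -/
structure AnnDB (P C K : Type) [Zero K] : Type where
  facts : Set (Fact P C)
  ann : Fact P C → K
  ann_eq_zero : ∀ a ∉ facts, ann a = 0

/-- Union of two annotated databases: annotations are added pointwise. -/
noncomputable def AnnDB.union [AddCommMonoid K] (d₁ d₂ : AnnDB P C K) : AnnDB P C K where
  facts := d₁.facts ∪ d₂.facts
  ann a := d₁.ann a + d₂.ann a
  ann_eq_zero a ha := by
    show d₁.ann a + d₂.ann a = 0
    rw [d₁.ann_eq_zero a fun h => ha (Set.mem_union_left _ h),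
      d₂.ann_eq_zero a fun h => ha (Set.mem_union_right _ h), add_zero]

/-- The facts derivable from `I` by one application of a rule of `prog`. -/
def derivable (prog : Set (Rule P C)) (I : Set (Fact P C)) : Set (Fact P C) :=
  { a | ∃ r ∈ prog, ∃ σ : Fin r.nvars → C,
      (∀ i, (r.body i).subst σ ∈ I) ∧ r.head.subst σ = a }

/-- The relational provenance of the immediate consequences: the sum over all rules and
homomorphisms deriving `a` of the product of the annotations of the body facts. -/
noncomputable def ruleSum [CommSemiring K] (prog : Set (Rule P C)) (I : Set (Fact P C))
    (lam : Fact P C → K) (a : Fact P C) : K :=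
  ∑ᶠ (p : (r : Rule P C) × (Fin r.nvars → C))
      (_ : p.1 ∈ prog ∧ (∀ i, (p.1.body i).subst p.2 ∈ I) ∧ p.1.head.subst p.2 = a),
    ∏ i : Fin p.1.nbody, lam ((p.1.body i).subst p.2)

/-- The annotation-aware immediate consequence operator `T_Σ`. -/
noncomputable def Tcons [CommSemiring K] (prog : Set (Rule P C)) (db : AnnDB P C K) :
    AnnDB P C K where
  facts := derivable prog db.facts
  ann a := if a ∈ derivable prog db.facts then ruleSum prog db.facts db.ann a else 0
  ann_eq_zero a ha := if_neg ha

/-- The operator `Δ_Σ`: `T_Σ` restricted to the newly derived facts. -/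
noncomputable def Dcons [CommSemiring K] (prog : Set (Rule P C)) (db : AnnDB P C K) :
    AnnDB P C K where
  facts := (Tcons prog db).facts \ db.facts
  ann a := if a ∈ (Tcons prog db).facts \ db.facts then (Tcons prog db).ann a else 0
  ann_eq_zero a ha := if_neg ha

/-- The naive evaluation sequence `I_n^0 := (D,K,λ)`, `I_n^{i+1} := T_Σ(I_n^i) ∪ (D,K,λ)`. -/
noncomputable def naiveSeq [CommSemiring K] (prog : Set (Rule P C)) (db : AnnDB P C K) :
    ℕ → AnnDB P C K
  | 0 => db
  | i + 1 => (Tcons prog (naiveSeq prog db i)).union db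

/-- The naive execution provenance semantics: the least upper bound of the annotations of `a`
along the naive evaluation sequence (and `0` if `a` is never derived). -/
noncomputable def NE [CommSemiring K] [PartialOrder K] (prog : Set (Rule P C))
    (db : AnnDB P C K) (a : Fact P C) : K :=
  if ∃ i, a ∈ (naiveSeq prog db i).facts then
    (if h : ∃ s, IsLUB (Set.range fun i => (naiveSeq prog db i).ann a) s then h.choose else 0)
  else 0

/-- The optimized naive evaluation sequence, which stops as soon as the target fact is
derived. -/
noncomputable def optSeq [CommSemiring K] (prog : Set (Rule P C)) (db : AnnDB P C K)
    (target : Fact P C) : ℕ → AnnDB P C K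
  | 0 => db
  | i + 1 =>
      if target ∈ (optSeq prog db target i).facts then optSeq prog db target i
      else (Tcons prog (optSeq prog db target i)).union db

/-- The optimized execution provenance semantics: the annotation of the target fact at the
stabilization point of the optimized naive evaluation sequence. -/
noncomputable def OE [CommSemiring K] (prog : Set (Rule P C)) (db : AnnDB P C K)
    (target : Fact P C) : K :=
  if h : ∃ k, ∀ ℓ, k ≤ ℓ → optSeq prog db target ℓ = optSeq prog db target k then
    (optSeq prog db target h.choose).ann target
  else 0

/-- The seminaive evaluation sequence `I_sn^0 := (D,K,λ)`, `I_sn^{i+1} := I_sn^i ∪ Δ_Σ(I_sn^i)`. -/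
noncomputable def semiSeq [CommSemiring K] (prog : Set (Rule P C)) (db : AnnDB P C K) :
    ℕ → AnnDB P C K
  | 0 => db
  | i + 1 => (semiSeq prog db i).union (Dcons prog (semiSeq prog db i))

/-- The seminaive execution provenance semantics: the annotation of the fact at the
stabilization point of the seminaive evaluation sequence. -/
noncomputable def SNE [CommSemiring K] (prog : Set (Rule P C)) (db : AnnDB P C K)
    (a : Fact P C) : K :=
  if h : ∃ k, ∀ ℓ, k ≤ ℓ → semiSeq prog db ℓ = semiSeq prog db k then
    (semiSeq prog db h.choose).ann a
  else 0

/-- The all-tree provenance semantics `AT`: the (possibly infinite) sum, over all derivation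
trees of `a`, of the product of the annotations of the leaves. -/
noncomputable def AT [CommSemiring K] [PartialOrder K] (prog : Set (Rule P C))
    (db : AnnDB P C K) (a : Fact P C) : K :=
  setSum (Set.univ : Set (DTree prog db.facts a)) fun t => t.weight db.ann

/-- The non-recursive tree provenance semantics `NRT`. -/
noncomputable def NRT [CommSemiring K] (prog : Set (Rule P C)) (db : AnnDB P C K)
    (a : Fact P C) : K :=
  ∑ᶠ (t : DTree prog db.facts a) (_ : t.nonRecursive), t.weight db.ann

/-- The minimal depth tree provenance semantics `MDT`. -/
noncomputable def MDT [CommSemiring K] (prog : Set (Rule P C)) (db : AnnDB P C K)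
    (a : Fact P C) : K :=
  ∑ᶠ (t : DTree prog db.facts a) (_ : t.minimalDepth), t.weight db.ann

/-- The hereditary minimal depth tree provenance semantics `HMDT`. -/
noncomputable def HMDT [CommSemiring K] (prog : Set (Rule P C)) (db : AnnDB P C K)
    (a : Fact P C) : K :=
  ∑ᶠ (t : DTree prog db.facts a) (_ : t.hereditaryMinimal), t.weight db.ann

/-- `σ'` agrees with `σ` on the head variables of `r` (i.e. `h'(x⃗) = h(x⃗)`). -/
def headAgree (r : Rule P C) (σ σ' : Fin r.nvars → C) : Prop :=
  ∀ v : Fin r.nvars, Term.var v ∈ r.head.args → σ' v = σ v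

/-- A `K`-annotated interpretation `(I,μ)` is a model of `Σ` and `(D,K,λ)`. -/
def IsAnnModel [CommSemiring K] [PartialOrder K] (prog : Set (Rule P C)) (db : AnnDB P C K)
    (I : Set (Fact P C)) (μ : Fact P C → K) : Prop :=
  db.facts ⊆ I ∧ (∀ a ∈ db.facts, db.ann a ≤ μ a) ∧
  ∀ r ∈ prog, ∀ σ : Fin r.nvars → C, (∀ i, (r.body i).subst σ ∈ I) →
    r.head.subst σ ∈ I ∧
    setSum {σ' : Fin r.nvars → C | (∀ i, (r.body i).subst σ' ∈ I) ∧ headAgree r σ σ'}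
        (fun σ' => ∏ i : Fin r.nbody, μ ((r.body i).subst σ'))
      ≤ μ (r.head.subst σ)

/-- The annotated model-based provenance semantics `AM`: the greatest lower bound, over all
annotated models, of the annotation of `a` (and `0` if `a` is not entailed). -/
noncomputable def AM [CommSemiring K] [PartialOrder K] (prog : Set (Rule P C))
    (db : AnnDB P C K) (a : Fact P C) : K :=
  if Entails prog db.facts a then
    setInf { x | ∃ I μ, IsAnnModel prog db I μ ∧ μ a = x }
  else 0

/-- A `K`-set-annotated interpretation `(I,μ)` is a model of `Σ` and `(D,K,λ)`. -/
def IsSetAnnModel [CommSemiring K] (prog : Set (Rule P C)) (db : AnnDB P C K)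
    (I : Set (Fact P C)) (μ : Fact P C → Set K) : Prop :=
  db.facts ⊆ I ∧ (∀ a ∈ db.facts, db.ann a ∈ μ a) ∧
  ∀ r ∈ prog, ∀ σ : Fin r.nvars → C, (∀ i, (r.body i).subst σ ∈ I) →
    r.head.subst σ ∈ I ∧
    ∀ g : Fin r.nbody → K, (∀ i, g i ∈ μ ((r.body i).subst σ)) →
      (∏ i, g i) ∈ μ (r.head.subst σ)

/-- The set-annotated model-based provenance semantics `SAM`: the sum of the elements of the
intersection, over all set-annotated models, of the annotation set of `a`. -/
noncomputable def SAM [CommSemiring K] [PartialOrder K] (prog : Set (Rule P C))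
    (db : AnnDB P C K) (a : Fact P C) : K :=
  setSum { k : K | ∀ I μ, IsSetAnnModel prog db I μ → k ∈ μ a } id

/-- The schema of a program: the predicates occurring in its rules. -/
def progSchema (prog : Set (Rule P C)) : Set P :=
  { p | ∃ r ∈ prog, r.head.pred = p ∨ ∃ i, (r.body i).pred = p }

/-- The schema of a database: the predicates occurring in its facts. -/
def dbSchema (D : Set (Fact P C)) : Set P := { p | ∃ a ∈ D, a.pred = p }

/-- The domain of a database: the constants occurring in its facts. -/
def dbConsts (D : Set (Fact P C)) : Set C := { c | ∃ a ∈ D, c ∈ a.args }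

/-- A ground rule built from a list of facts (the body) and a fact (the head). -/
def factRule (body : List (Fact P C)) (head : Fact P C) : Rule P C where
  nvars := 0
  nbody := body.length
  body := fun i => (body.get i).toRuleAtom 0
  head := head.toRuleAtom 0
  vars_in_body := fun v => v.elim0

/-- A ground instance of a rule. -/
def Rule.ground (r : Rule P C) (σ : Fin r.nvars → C) : Rule P C where
  nvars := 0
  nbody := r.nbody
  body := fun i => ((r.body i).subst σ).toRuleAtom 0
  head := (r.head.subst σ).toRuleAtom 0
  vars_in_body := fun v => v.elim0

/-- The grounding `Σ_D` of a program w.r.t. the domain of a database. -/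
def grounding (prog : Set (Rule P C)) (D : Set (Fact P C)) : Set (Rule P C) :=
  { r' | ∃ r ∈ prog, ∃ σ : Fin r.nvars → C, (∀ v, σ v ∈ dbConsts D) ∧ r' = r.ground σ }

/-- Renaming of predicates in a rule. -/
def Rule.mapPred {Q : Type} (f : P → Q) (r : Rule P C) : Rule Q C where
  nvars := r.nvars
  nbody := r.nbody
  body := fun i => (r.body i).mapPred f
  head := r.head.mapPred f
  vars_in_body := fun v => r.vars_in_body v

/-- An adornment of a rule: exactly one body atom is adorned (sent to the `Sum.inr` copy of
the predicates), the head is adorned or not, all the other atoms keep their predicates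
(`Sum.inl` copy). -/
def adornRule (r : Rule P C) (i : Fin r.nbody) (adornHead : Bool) : Rule (P ⊕ P) C where
  nvars := r.nvars
  nbody := r.nbody
  body := fun j => if j = i then (r.body j).mapPred Sum.inr else (r.body j).mapPred Sum.inl
  head := if adornHead then r.head.mapPred Sum.inr else r.head.mapPred Sum.inl
  vars_in_body := by
    intro v
    obtain ⟨j, hj⟩ := r.vars_in_body v
    refine ⟨j, ?_⟩
    try dsimp only
    split <;> exact hj

/-- The set of adornments of a rule. -/
def adornedRules (r : Rule P C) : Set (Rule (P ⊕ P) C) :=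
  { r' | ∃ (i : Fin r.nbody) (b : Bool), r' = adornRule r i b }

noncomputable instance (X : Type) : PartialOrder (MvPowerSeries X ℕ∞) :=
  inferInstanceAs (PartialOrder ((X →₀ ℕ) → ℕ∞))

/-! With every database fact `a` annotated by the variable `f a`, the weight of a derivation
tree `t` is the monomial `X ^ t.degree`, where `t.degree` counts the leaves of `t` by their
variables; so the monomials occurring in `AT` are exactly the degrees of the derivation trees
of `α`. Every annotated model gives each such degree a coefficient `≥ 1` (induction on the
tree), while annotating each fact with `⊤` on the degrees of its derivation trees and `0`
elsewhere is an annotated model; hence `AM` has the same monomials. For `SAM`, the sets of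
tree weights form the least set-annotated model, so `SAM` is the sum of the set of monomials
`X ^ t.degree`, in which each monomial counts once. -/

open MvPowerSeries

section SetSum

variable {K L T : Type}

lemma isLUB_setSum [AddCommMonoid K] [PartialOrder K] {S : Set T} {f : T → K}
    (h : ∃ s, IsLUB (partialSums S f) s) : IsLUB (partialSums S f) (setSum S f) := by
  rw [setSum, dif_pos h]
  exact h.choose_spec

lemma isGLB_setInf [Zero K] [PartialOrder K] {S : Set K} (h : ∃ z, IsGLB S z) :
    IsGLB S (setInf S) := by
  rw [setInf, dif_pos h]
  exact h.choose_spec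

lemma image_partialSums {F : Type} [AddCommMonoid K] [AddCommMonoid L] [FunLike F K L]
    [AddMonoidHomClass F K L] (g : F) (S : Set T) (f : T → K) :
    g '' partialSums S f = partialSums S (g ∘ f) := by
  ext x
  constructor
  · rintro ⟨_, ⟨A, hA, rfl⟩, rfl⟩
    exact ⟨A, hA, map_sum g f A⟩
  · rintro ⟨A, hA, rfl⟩
    exact ⟨_, ⟨A, hA, rfl⟩, map_sum g f A⟩

lemma ne_zero_iff_of_isLUB_partialSums [AddCommMonoid K] [PartialOrder K]
    [CanonicallyOrderedAdd K] {S : Set T} {g : T → K} {x : K}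
    (hx : IsLUB (partialSums S g) x) : x ≠ 0 ↔ ∃ t ∈ S, g t ≠ 0 := by
  constructor
  · intro hne
    by_contra! hall
    refine hne (le_antisymm (hx.2 ?_) zero_le)
    rintro _ ⟨A, hA, rfl⟩
    exact (Finset.sum_eq_zero fun t ht => hall t (hA ht)).le
  · rintro ⟨t, ht, hne⟩
    have hle : g t ≤ x := hx.1 ⟨{t}, by simpa using ht, by simp⟩
    exact (pos_iff_ne_zero.2 hne |>.trans_le hle).ne'

end SetSum

section PowerSeries

variable {X T : Type}

lemma le_iff_coeff_le {φ ψ : MvPowerSeries X ℕ∞} : φ ≤ ψ ↔ ∀ m, coeff m φ ≤ coeff m ψ :=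
  Iff.rfl

lemma isLUB_iff_coeff {A : Set (MvPowerSeries X ℕ∞)} {φ : MvPowerSeries X ℕ∞} :
    IsLUB A φ ↔ ∀ m, IsLUB (coeff m '' A) (coeff m φ) :=
  isLUB_pi

lemma isGLB_iff_coeff {A : Set (MvPowerSeries X ℕ∞)} {φ : MvPowerSeries X ℕ∞} :
    IsGLB A φ ↔ ∀ m, IsGLB (coeff m '' A) (coeff m φ) :=
  isGLB_pi

lemma exists_isLUB (A : Set (MvPowerSeries X ℕ∞)) : ∃ φ, IsLUB A φ :=
  ⟨fun m => sSup (coeff m '' A), isLUB_iff_coeff.2 fun _ => isLUB_sSup _⟩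

lemma exists_isGLB (A : Set (MvPowerSeries X ℕ∞)) : ∃ φ, IsGLB A φ :=
  ⟨fun m => sInf (coeff m '' A), isGLB_iff_coeff.2 fun _ => isGLB_sInf _⟩

lemma isLUB_coeff_setSum (S : Set T) (f : T → MvPowerSeries X ℕ∞) (m : X →₀ ℕ) :
    IsLUB (partialSums S (coeff m ∘ f)) (coeff m (setSum S f)) := by
  rw [← image_partialSums]
  exact isLUB_iff_coeff.1 (isLUB_setSum (exists_isLUB _)) m

lemma isGLB_coeff_setInf (S : Set (MvPowerSeries X ℕ∞)) (m : X →₀ ℕ) :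
    IsGLB (coeff m '' S) (coeff m (setInf S)) :=
  isGLB_iff_coeff.1 (isGLB_setInf (exists_isGLB S)) m

lemma coeff_setSum_ne_zero_iff (S : Set T) (f : T → MvPowerSeries X ℕ∞) (m : X →₀ ℕ) :
    coeff m (setSum S f) ≠ 0 ↔ ∃ t ∈ S, coeff m (f t) ≠ 0 :=
  ne_zero_iff_of_isLUB_partialSums (isLUB_coeff_setSum S f m)

lemma coeff_setSum_image_monomial (E : Set (X →₀ ℕ)) (m : X →₀ ℕ) :
    coeff m (setSum ((fun d => monomial d (1 : ℕ∞)) '' E) id) = if m ∈ E then 1 else 0 := by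
  have hinj : ∀ d, monomial d (1 : ℕ∞) = monomial m 1 → d = m := fun d h => by
    simpa [coeff_monomial] using congrArg (coeff d) h
  refine (isLUB_coeff_setSum _ id m).unique (IsGreatest.isLUB ⟨?_, ?_⟩)
  · split_ifs with hm
    · exact ⟨{monomial m 1}, by simpa using ⟨m, hm, rfl⟩, by simp⟩
    · exact ⟨∅, by simp, by simp⟩
  · rintro _ ⟨A, hA, rfl⟩
    have hterm : ∀ k ∈ A, coeff m k = if k = monomial m 1 then 1 else 0 := by
      intro k hk
      obtain ⟨d, -, rfl⟩ := hA hk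
      by_cases hd : d = m
      · simp [hd]
      · simp only [coeff_monomial, if_neg (Ne.symm hd), if_neg fun h => hd (hinj d h)]
    show ∑ k ∈ A, coeff m k ≤ _
    rw [Finset.sum_congr rfl hterm, Finset.sum_ite_eq']
    split_ifs with hmA hm
    · exact le_rfl
    · obtain ⟨d, hd, hdm⟩ := hA hmA
      exact absurd (hinj d hdm ▸ hd) hm
    all_goals exact zero_le

variable {ι : Type} [Fintype ι]

lemma exists_sum_eq_of_coeff_prod_ne_zero {R : Type} [CommSemiring R]
    (φ : ι → MvPowerSeries X R) {m : X →₀ ℕ} (h : coeff m (∏ i, φ i) ≠ 0) :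
    ∃ d : ι → X →₀ ℕ, ∑ i, d i = m ∧ ∀ i, coeff (d i) (φ i) ≠ 0 := by
  rw [coeff_prod] at h
  obtain ⟨l, hl, hne⟩ := Finset.exists_ne_zero_of_sum_ne_zero h
  refine ⟨fun i => l i, by simpa using (Finset.mem_finsuppAntidiag.mp hl).1, fun i h0 => ?_⟩
  exact hne (Finset.prod_eq_zero (Finset.mem_univ i) h0)

lemma prod_coeff_le_coeff_prod (φ : ι → MvPowerSeries X ℕ∞) (d : ι → X →₀ ℕ) :
    ∏ i, coeff (d i) (φ i) ≤ coeff (∑ i, d i) (∏ i, φ i) := by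
  rw [coeff_prod]
  have hmem : Finsupp.equivFunOnFinite.symm d ∈ Finset.finsuppAntidiag Finset.univ (∑ i, d i) :=
    Finset.mem_finsuppAntidiag.2 ⟨by simp, Finset.subset_univ _⟩
  simpa using Finset.single_le_sum
    (f := fun l : ι →₀ X →₀ ℕ => ∏ i, coeff (l i) (φ i)) (fun _ _ => zero_le) hmem

end PowerSeries

variable {X : Type} {prog : Set (Rule P C)} {f : Fact P C → X}
  {db : AnnDB P C (MvPowerSeries X ℕ∞)}

lemma Rule.head_subst_eq_of_headAgree {r : Rule P C} {σ σ' : Fin r.nvars → C}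
    (h : headAgree r σ σ') : r.head.subst σ' = r.head.subst σ := by
  unfold Atom.subst
  congr 1
  refine List.map_congr_left fun t ht => ?_
  cases t with
  | const c => rfl
  | var v => exact h v ht

lemma DTree.entails {D : Set (Fact P C)} {a : Fact P C} (t : DTree prog D a) :
    Entails prog D a := by
  induction t with
  | leaf a ha => exact fun I hD _ => hD ha
  | node r hr σ _ ih => exact fun I hD hcl => hcl r hr σ fun i => ih i I hD hcl

noncomputable def DTree.degree {D : Set (Fact P C)} (f : Fact P C → X) :
    ∀ {a : Fact P C}, DTree prog D a → X →₀ ℕ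
  | _, .leaf a _ => Finsupp.single (f a) 1
  | _, .node r _ _ ch => ∑ i, (ch i).degree f

def treeDegrees (prog : Set (Rule P C)) (D : Set (Fact P C)) (f : Fact P C → X)
    (a : Fact P C) : Set (X →₀ ℕ) :=
  Set.range fun t : DTree prog D a => t.degree f

noncomputable def degreeIndicator (prog : Set (Rule P C)) (D : Set (Fact P C))
    (f : Fact P C → X) (a : Fact P C) : MvPowerSeries X ℕ∞ :=
  fun m => if m ∈ treeDegrees prog D f a then ⊤ else 0

lemma coeff_degreeIndicator (D : Set (Fact P C)) (a : Fact P C) (m : X →₀ ℕ) :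
    coeff m (degreeIndicator prog D f a) = if m ∈ treeDegrees prog D f a then ⊤ else 0 :=
  rfl

lemma mem_treeDegrees_of_coeff_prod_ne_zero {D : Set (Fact P C)} {r : Rule P C}
    (hr : r ∈ prog) (σ : Fin r.nvars → C) {m : X →₀ ℕ}
    (h : coeff m (∏ i, degreeIndicator prog D f ((r.body i).subst σ)) ≠ 0) :
    m ∈ treeDegrees prog D f (r.head.subst σ) := by
  obtain ⟨d, rfl, hd⟩ := exists_sum_eq_of_coeff_prod_ne_zero _ h
  have hdeg : ∀ i, d i ∈ treeDegrees prog D f ((r.body i).subst σ) := fun i => by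
    by_contra hi
    exact hd i (by rw [coeff_degreeIndicator, if_neg hi])
  choose t ht using hdeg
  exact ⟨.node r hr σ t, by simp only [DTree.degree, ht]⟩

lemma weight_mem_of_isSetAnnModel {I : Set (Fact P C)}
    {μ : Fact P C → Set (MvPowerSeries X ℕ∞)} (hM : IsSetAnnModel prog db I μ)
    {a : Fact P C} (t : DTree prog db.facts a) : a ∈ I ∧ t.weight db.ann ∈ μ a := by
  induction t with
  | leaf a ha => exact ⟨hM.1 ha, hM.2.1 a ha⟩
  | node r hr σ _ ih =>
      obtain ⟨hhead, hprod⟩ := hM.2.2 r hr σ fun i => (ih i).1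
      exact ⟨hhead, hprod _ fun i => (ih i).2⟩

lemma isSetAnnModel_range_weight :
    IsSetAnnModel prog db {a | Nonempty (DTree prog db.facts a)}
      fun a => Set.range fun t : DTree prog db.facts a => t.weight db.ann := by
  refine ⟨fun a ha => ⟨.leaf a ha⟩, fun a ha => ⟨.leaf a ha, rfl⟩, fun r hr σ hbody => ?_⟩
  refine ⟨⟨.node r hr σ fun i => (hbody i).some⟩, fun g hg => ?_⟩
  choose t ht using hg
  exact ⟨.node r hr σ t, Finset.prod_congr rfl fun i _ => ht i⟩

section Annotated

variable (hann : ∀ a ∈ db.facts, db.ann a = MvPowerSeries.X (f a))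
include hann

lemma DTree.weight_eq_monomial {a : Fact P C} (t : DTree prog db.facts a) :
    t.weight db.ann = monomial (t.degree f) 1 := by
  induction t with
  | leaf a ha => rw [DTree.weight, DTree.degree, hann a ha, X_def]
  | node r _ _ _ ih =>
      simp only [DTree.weight, DTree.degree, ih, prod_monomial, Finset.prod_const_one]

lemma coeff_AT_ne_zero_iff (α : Fact P C) (m : X →₀ ℕ) :
    coeff m (AT prog db α) ≠ 0 ↔ m ∈ treeDegrees prog db.facts f α := by
  rw [AT, coeff_setSum_ne_zero_iff]
  simp [DTree.weight_eq_monomial hann, coeff_monomial, treeDegrees, eq_comm]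

lemma isAnnModel_degreeIndicator :
    IsAnnModel prog db {a | Nonempty (DTree prog db.facts a)}
      (degreeIndicator prog db.facts f) := by
  refine ⟨fun a ha => ⟨.leaf a ha⟩, fun a ha => le_iff_coeff_le.2 fun m => ?_, ?_⟩
  · rw [hann a ha, X_def, coeff_monomial, coeff_degreeIndicator]
    by_cases hm : m = Finsupp.single (f a) 1
    · rw [if_pos hm, if_pos ⟨.leaf a ha, hm.symm⟩]
      exact le_top
    · rw [if_neg hm]
      exact zero_le
  · intro r hr σ hbody
    refine ⟨⟨.node r hr σ fun i => (hbody i).some⟩, (isLUB_setSum (exists_isLUB _)).2 ?_⟩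
    rintro _ ⟨A, hA, rfl⟩
    refine le_iff_coeff_le.2 fun m => ?_
    rw [map_sum, coeff_degreeIndicator]
    split_ifs with hm
    · exact le_top
    refine (Finset.sum_eq_zero fun σ' hσ' => ?_).le
    by_contra hne
    exact hm (Rule.head_subst_eq_of_headAgree (hA hσ').2 ▸
      mem_treeDegrees_of_coeff_prod_ne_zero hr σ' hne)

lemma one_le_coeff_of_isAnnModel {I : Set (Fact P C)} {μ : Fact P C → MvPowerSeries X ℕ∞}
    (hM : IsAnnModel prog db I μ) {a : Fact P C} (t : DTree prog db.facts a) :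
    a ∈ I ∧ 1 ≤ coeff (t.degree f) (μ a) := by
  induction t with
  | leaf a ha =>
      refine ⟨hM.1 ha, ?_⟩
      simpa [hann a ha, X_def, coeff_monomial, DTree.degree] using
        le_iff_coeff_le.1 (hM.2.1 a ha) (Finsupp.single (f a) 1)
  | node r hr σ ch ih =>
      obtain ⟨hhead, hle⟩ := hM.2.2 r hr σ fun i => (ih i).1
      have hσ : ∏ i, μ ((r.body i).subst σ) ≤ setSum
          {σ' | (∀ i, (r.body i).subst σ' ∈ I) ∧ headAgree r σ σ'}
          (fun σ' => ∏ i, μ ((r.body i).subst σ')) :=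
        (isLUB_setSum (exists_isLUB _)).1
          ⟨{σ}, by simpa using ⟨fun i => (ih i).1, fun _ _ => rfl⟩, by simp⟩
      refine ⟨hhead, ?_⟩
      calc (1 : ℕ∞) ≤ ∏ i, coeff ((ch i).degree f) (μ ((r.body i).subst σ)) :=
            Finset.one_le_prod' fun i _ => (ih i).2
        _ ≤ coeff (∑ i, (ch i).degree f) (∏ i, μ ((r.body i).subst σ)) :=
            prod_coeff_le_coeff_prod _ _
        _ ≤ coeff (DTree.degree f (.node r hr σ ch)) (μ (r.head.subst σ)) :=
            le_iff_coeff_le.1 (hσ.trans hle) _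

lemma coeff_AM_ne_zero_iff (α : Fact P C) (m : X →₀ ℕ) :
    coeff m (AM prog db α) ≠ 0 ↔ m ∈ treeDegrees prog db.facts f α := by
  constructor
  · intro h
    by_contra hm
    refine h ?_
    rw [AM]
    split_ifs
    · have hle := (isGLB_coeff_setInf {x | ∃ I μ, IsAnnModel prog db I μ ∧ μ α = x} m).1
        ⟨_, ⟨_, _, isAnnModel_degreeIndicator hann, rfl⟩, rfl⟩
      rw [coeff_degreeIndicator, if_neg hm] at hle
      exact nonpos_iff_eq_zero.1 hle
    · exact map_zero _
  · rintro ⟨t, rfl⟩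
    rw [AM, if_pos t.entails]
    have hge : 1 ≤ coeff (t.degree f) (setInf {x | ∃ I μ, IsAnnModel prog db I μ ∧ μ α = x}) :=
      (isGLB_coeff_setInf _ _).2 <| by
        rintro _ ⟨_, ⟨I, μ, hM, rfl⟩, rfl⟩
        exact (one_le_coeff_of_isAnnModel hann hM t).2
    exact (zero_lt_one.trans_le hge).ne'

lemma coeff_SAM (α : Fact P C) (m : X →₀ ℕ) :
    coeff m (SAM prog db α) = if m ∈ treeDegrees prog db.facts f α then 1 else 0 := by
  have hcertain : {k | ∀ I μ, IsSetAnnModel prog db I μ → k ∈ μ α} =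
      (fun d => monomial d 1) '' treeDegrees prog db.facts f α := by
    ext k
    refine ⟨fun hk => ?_, ?_⟩
    · obtain ⟨t, rfl⟩ := hk _ _ isSetAnnModel_range_weight
      exact ⟨t.degree f, ⟨t, rfl⟩, (t.weight_eq_monomial hann).symm⟩
    · rintro ⟨_, ⟨t, rfl⟩, rfl⟩ I μ hM
      simpa only [t.weight_eq_monomial hann] using (weight_mem_of_isSetAnnModel hM t).2
  rw [SAM, hcertain, coeff_setSum_image_monomial]

end Annotated

theorem statement_2_general (P C X : Type) (prog : Set (Rule P C))
    (db : AnnDB P C (MvPowerSeries X ℕ∞))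
    (f : Fact P C → X)
    (hann : ∀ a ∈ db.facts, db.ann a = MvPowerSeries.X (f a))
    (α : Fact P C) :
    (∀ m : X →₀ ℕ,
        MvPowerSeries.coeff (R := ℕ∞) m (AT prog db α) ≠ 0 ↔
          MvPowerSeries.coeff (R := ℕ∞) m (AM prog db α) ≠ 0)
      ∧ ∀ m : X →₀ ℕ,
          MvPowerSeries.coeff (R := ℕ∞) m (SAM prog db α) =
            if MvPowerSeries.coeff (R := ℕ∞) m (AT prog db α) ≠ 0 then 1 else 0 := by
  refine ⟨fun m => ?_, fun m => ?_⟩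
  · rw [coeff_AT_ne_zero_iff hann, coeff_AM_ne_zero_iff hann]
  · rw [coeff_SAM hann]
    exact if_congr (coeff_AT_ne_zero_iff hann α m).symm rfl rfl

/-- over the semiring `ℕ∞⟦X⟧` of formal power series, with each database fact
annotated by its own variable: (i) a monomial occurs in `AT` iff it occurs in `AM`;
(ii) `SAM` is obtained from `AT` by setting all nonzero coefficients to `1`. -/
theorem statement_2 (P C X : Type) (prog : Set (Rule P C)) (hprog : prog.Finite)
    (db : AnnDB P C (MvPowerSeries X ℕ∞)) (hfin : db.facts.Finite)
    (f : Fact P C → X) (hinj : Set.InjOn f db.facts)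
    (hann : ∀ a ∈ db.facts, db.ann a = MvPowerSeries.X (f a))
    (hann0 : ∀ a ∈ db.facts, db.ann a ≠ 0) (α : Fact P C) :
    (∀ m : X →₀ ℕ,
        MvPowerSeries.coeff (R := ℕ∞) m (AT prog db α) ≠ 0 ↔
          MvPowerSeries.coeff (R := ℕ∞) m (AM prog db α) ≠ 0)
      ∧ ∀ m : X →₀ ℕ,
          MvPowerSeries.coeff (R := ℕ∞) m (SAM prog db α) =
            if MvPowerSeries.coeff (R := ℕ∞) m (AT prog db α) ≠ 0 then 1 else 0 :=
  statement_2_general P C X prog db f hann α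

end Datalog
end

section
/- The naive execution provenance semantics equals the all-tree semantics: for every Datalog program Σ, annotated database (D,K,λ) with K a commutative ω-continuous semiring, and fact α, NE(Σ,D,K,λ,α) = AT(Σ,D,K,λ,α). -/
attribute [local instance] Classical.propDecidable

namespace Datalog

variable {P C K : Type}

/-!
By induction on `i`, the annotation of `a` at the `i`-th naive stage is the sum of `Λ(t)` over the
finitely many derivation trees `t` of `a` of depth at most `i`: a tree of depth at most `i + 1` is
either a leaf or a rule instance on top of trees of depth at most `i`, and distributivity turns
the product of the children's sums in `T_Σ` into the sum over these trees. The depth-bounded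
sets of trees exhaust all trees, so in the natural order the chain of stage annotations and the
finite partial sums defining `AT` have the same upper bounds, hence the same supremum.
-/

instance OmegaCommSemiring.toCanonicallyOrderedAdd [OmegaCommSemiring K] :
    CanonicallyOrderedAdd K where
  exists_add_of_le h := by
    obtain ⟨c, rfl⟩ := (OmegaCommSemiring.le_iff_exists_add _ _).1 h
    exact ⟨c, rfl⟩
  le_add_self a b := (OmegaCommSemiring.le_iff_exists_add _ _).2 ⟨b, add_comm a b⟩
  le_self_add a b := (OmegaCommSemiring.le_iff_exists_add _ _).2 ⟨b, rfl⟩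

section PartialSums

variable {T : Type} [AddCommMonoid K] {S : Set T} {f : T → K} {s : ℕ → Finset T}

theorem upperBounds_partialSums_eq [Preorder K] [CanonicallyOrderedAdd K] (hs : Monotone s)
    (hsub : ∀ i, ↑(s i) ⊆ S) (hcover : ∀ t ∈ S, ∃ i, t ∈ s i) :
    upperBounds (partialSums S f) = upperBounds (Set.range fun i => ∑ t ∈ s i, f t) := by
  ext u
  constructor
  · rintro hu _ ⟨i, rfl⟩
    exact hu ⟨s i, hsub i, rfl⟩
  · rintro hu _ ⟨F, hF, rfl⟩
    have hdir : Directed (· ⊆ ·) fun i => (s i : Set T) :=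
      Monotone.directed_le fun _ _ hij => Finset.coe_subset.2 (hs hij)
    obtain ⟨i, hi⟩ := hdir.exists_mem_subset_of_finset_subset_biUnion
      fun t ht => Set.mem_iUnion.2 (hcover t (hF ht))
    exact (Finset.sum_le_sum_of_subset (Finset.coe_subset.1 hi)).trans (hu ⟨i, rfl⟩)

theorem isLUB_partialSums_iff [Preorder K] [CanonicallyOrderedAdd K] (hs : Monotone s)
    (hsub : ∀ i, ↑(s i) ⊆ S) (hcover : ∀ t ∈ S, ∃ i, t ∈ s i) {L : K} :
    IsLUB (partialSums S f) L ↔ IsLUB (Set.range fun i => ∑ t ∈ s i, f t) L := by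
  rw [IsLUB, IsLUB, upperBounds_partialSums_eq hs hsub hcover]

theorem setSum_eq_of_isLUB [PartialOrder K] {L : K} (h : IsLUB (partialSums S f) L) :
    setSum S f = L := by
  rw [setSum, dif_pos ⟨L, h⟩]
  exact (Exists.choose_spec ⟨L, h⟩).unique h

end PartialSums

theorem NE_eq_of_isLUB [CommSemiring K] [PartialOrder K] {prog : Set (Rule P C)}
    {db : AnnDB P C K} {a : Fact P C} {L : K}
    (h : IsLUB (Set.range fun i => (naiveSeq prog db i).ann a) L) : NE prog db a = L := by
  rw [NE]
  split_ifs with hmem hlub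
  · exact hlub.choose_spec.unique h
  · exact absurd ⟨L, h⟩ hlub
  · have hzero : (fun i => (naiveSeq prog db i).ann a) = fun _ => 0 :=
      funext fun i => (naiveSeq prog db i).ann_eq_zero a fun ha => hmem ⟨i, ha⟩
    rw [hzero, Set.range_const] at h
    exact isLUB_singleton.unique h

section Finiteness

variable {prog : Set (Rule P C)} {I : Set (Fact P C)}

theorem dbConsts_finite (hI : I.Finite) : (dbConsts I).Finite :=
  (hI.biUnion fun a _ => a.args.finite_toSet).subset fun _ ⟨_, ha, hc⟩ => Set.mem_biUnion ha hc

theorem mem_dbConsts_of_body_subst_mem {r : Rule P C} {σ : Fin r.nvars → C}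
    (hb : ∀ j, (r.body j).subst σ ∈ I) (v : Fin r.nvars) : σ v ∈ dbConsts I := by
  obtain ⟨j, hj⟩ := r.vars_in_body v
  exact ⟨(r.body j).subst σ, hb j, List.mem_map.2 ⟨Term.var v, hj, rfl⟩⟩

theorem finite_setOf_body_subst_mem (hprog : prog.Finite) (hI : I.Finite) :
    {p : (r : Rule P C) × (Fin r.nvars → C) |
      p.1 ∈ prog ∧ ∀ j, (p.1.body j).subst p.2 ∈ I}.Finite := by
  refine (hprog.biUnion fun r _ =>
    ((Set.Finite.pi' fun _ => dbConsts_finite hI).image (Sigma.mk r))).subset ?_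
  rintro ⟨r, σ⟩ ⟨hr, hb⟩
  exact Set.mem_biUnion hr ⟨σ, fun v => mem_dbConsts_of_body_subst_mem hb v, rfl⟩

/-- The index set of `ruleSum prog I lam a`. -/
def ruleInstances (prog : Set (Rule P C)) (I : Set (Fact P C)) (a : Fact P C) :
    Set ((r : Rule P C) × (Fin r.nvars → C)) :=
  { p | p.1 ∈ prog ∧ (∀ j, (p.1.body j).subst p.2 ∈ I) ∧ p.1.head.subst p.2 = a }

theorem ruleInstances_finite (hprog : prog.Finite) (hI : I.Finite) (a : Fact P C) :
    (ruleInstances prog I a).Finite :=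
  (finite_setOf_body_subst_mem hprog hI).subset fun _ hp => ⟨hp.1, hp.2.1⟩

theorem derivable_finite (hprog : prog.Finite) (hI : I.Finite) :
    (derivable prog I).Finite := by
  refine ((finite_setOf_body_subst_mem hprog hI).image fun p => p.1.head.subst p.2).subset ?_
  rintro a ⟨r, hr, σ, hb, rfl⟩
  exact ⟨⟨r, σ⟩, ⟨hr, hb⟩, rfl⟩

theorem ruleSum_eq_sum [CommSemiring K] (hprog : prog.Finite) (hI : I.Finite)
    (lam : Fact P C → K) (a : Fact P C) :
    ruleSum prog I lam a = ∑ p ∈ (ruleInstances_finite hprog hI a).toFinset,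
      ∏ j, lam ((p.1.body j).subst p.2) :=
  finsum_mem_eq_finite_toFinset_sum _ _

variable [CommSemiring K] {db : AnnDB P C K}

theorem naiveSeq_facts_finite (hprog : prog.Finite) (hfin : db.facts.Finite) (i : ℕ) :
    (naiveSeq prog db i).facts.Finite := by
  induction i with
  | zero => exact hfin
  | succ i ih => exact (derivable_finite hprog ih).union hfin

end Finiteness

theorem facts_subset_naiveSeq_facts [CommSemiring K] {prog : Set (Rule P C)}
    {db : AnnDB P C K} : ∀ i, db.facts ⊆ (naiveSeq prog db i).facts
  | 0 => subset_rfl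
  | _ + 1 => Set.subset_union_right

theorem Tcons_ann [CommSemiring K] (prog : Set (Rule P C)) (db : AnnDB P C K) (a : Fact P C) :
    (Tcons prog db).ann a = ruleSum prog db.facts db.ann a := by
  by_cases ha : a ∈ derivable prog db.facts
  · exact if_pos ha
  · have hempty : ruleInstances prog db.facts a = ∅ :=
      Set.eq_empty_of_forall_notMem fun p ⟨hr, hb, hh⟩ => ha ⟨p.1, hr, p.2, hb, hh⟩
    show ite _ _ _ = ∑ᶠ p ∈ ruleInstances prog db.facts a, _
    rw [if_neg ha, hempty, finsum_mem_empty]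

namespace DTree

variable {prog : Set (Rule P C)} {D : Set (Fact P C)}

def root : ∀ {a : Fact P C}, DTree prog D a → Option ((r : Rule P C) × (Fin r.nvars → C))
  | _, .leaf _ _ => none
  | _, .node r _ σ _ => some ⟨r, σ⟩

theorem depth_node_le_succ_iff {r : Rule P C} {hr : r ∈ prog} {σ : Fin r.nvars → C}
    {ch : ∀ j, DTree prog D ((r.body j).subst σ)} {i : ℕ} :
    (node r hr σ ch).depth ≤ i + 1 ↔ ∀ j, (ch j).depth ≤ i := by
  simp [depth]

theorem root_eq_none_of_depth_le_zero {a : Fact P C} {t : DTree prog D a}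
    (ht : t.depth ≤ 0) : t.root = none := by
  cases t with
  | leaf => rfl
  | node => simp [depth] at ht

theorem exists_eq_leaf_of_root_eq_none {a : Fact P C} {t : DTree prog D a}
    (h : t.root = none) : ∃ ha : a ∈ D, t = leaf a ha := by
  cases t with
  | leaf _ ha => exact ⟨ha, rfl⟩
  | node => cases h

theorem exists_eq_node_of_root_eq_some {a : Fact P C} {t : DTree prog D a} {r : Rule P C}
    {σ : Fin r.nvars → C} (h : t.root = some ⟨r, σ⟩) :
    ∃ (hr : r ∈ prog) (ha : r.head.subst σ = a) (ch : ∀ j, DTree prog D ((r.body j).subst σ)),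
      t = ha ▸ node r hr σ ch := by
  cases t with
  | leaf => cases h
  | node r' hr' σ' ch' =>
    obtain ⟨rfl, h⟩ := Sigma.mk.inj_iff.1 (Option.some.inj h)
    cases h
    exact ⟨hr', rfl, ch', rfl⟩

theorem subsingleton_setOf_root_eq_none (a : Fact P C) :
    {t : DTree prog D a | t.root = none}.Subsingleton := by
  intro t ht t' ht'
  obtain ⟨_, rfl⟩ := exists_eq_leaf_of_root_eq_none ht
  obtain ⟨_, rfl⟩ := exists_eq_leaf_of_root_eq_none ht'
  rfl

theorem finite_setOf_root_eq_some {a : Fact P C} {r : Rule P C} {σ : Fin r.nvars → C} {i : ℕ}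
    (hch : ∀ j, {t : DTree prog D ((r.body j).subst σ) | t.depth ≤ i}.Finite) :
    {t : DTree prog D a | t.depth ≤ i + 1 ∧ t.root = some ⟨r, σ⟩}.Finite := by
  rcases Set.eq_empty_or_nonempty {t : DTree prog D a | t.depth ≤ i + 1 ∧ t.root = some ⟨r, σ⟩}
    with h | ⟨t, -, ht⟩
  · exact h ▸ Set.finite_empty
  obtain ⟨hr, rfl, -⟩ := exists_eq_node_of_root_eq_some ht
  refine ((Set.Finite.pi hch).image (node r hr σ)).subset ?_
  rintro t ⟨hd, hroot⟩
  obtain ⟨_, _, ch, rfl⟩ := exists_eq_node_of_root_eq_some hroot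
  exact ⟨ch, fun j _ => depth_node_le_succ_iff.1 hd j, rfl⟩

variable [CommSemiring K]

theorem sum_filter_root_eq_none {a : Fact P C} (s : Finset (DTree prog D a))
    (hs : ∀ ha : a ∈ D, leaf a ha ∈ s) (lam : Fact P C → K) (hlam : a ∉ D → lam a = 0) :
    ∑ t ∈ s with t.root = none, t.weight lam = lam a := by
  by_cases ha : a ∈ D
  · have hleaf : leaf a ha ∈ s.filter fun t => t.root = none := Finset.mem_filter.2 ⟨hs ha, rfl⟩
    rw [Finset.sum_eq_single_of_mem _ hleaf]
    · rfl
    intro t ht hne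
    obtain ⟨_, rfl⟩ := exists_eq_leaf_of_root_eq_none (Finset.mem_filter.1 ht).2
    exact absurd rfl hne
  · rw [hlam ha]
    refine Finset.sum_eq_zero fun t ht => ?_
    exact absurd (exists_eq_leaf_of_root_eq_none (Finset.mem_filter.1 ht).2).1 ha

theorem sum_filter_root_eq_some {r : Rule P C} (hr : r ∈ prog) {σ : Fin r.nvars → C}
    (s : Finset (DTree prog D (r.head.subst σ)))
    (c : ∀ j, Finset (DTree prog D ((r.body j).subst σ)))
    (hs : ∀ ch, node r hr σ ch ∈ s ↔ ∀ j, ch j ∈ c j) (lam : Fact P C → K) :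
    ∑ t ∈ s with t.root = some ⟨r, σ⟩, t.weight lam = ∏ j, ∑ t ∈ c j, t.weight lam := by
  rw [Finset.prod_univ_sum]
  symm
  refine Finset.sum_bij (fun ch _ => node r hr σ ch) ?_ ?_ ?_ fun _ _ => rfl
  · intro ch hch
    exact Finset.mem_filter.2 ⟨(hs ch).2 (Fintype.mem_piFinset.1 hch), rfl⟩
  · intro ch _ ch' _ h
    cases h
    rfl
  · intro t ht
    obtain ⟨ht, hroot⟩ := Finset.mem_filter.1 ht
    obtain ⟨_, _, ch, rfl⟩ := exists_eq_node_of_root_eq_some hroot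
    exact ⟨ch, Fintype.mem_piFinset.2 ((hs ch).1 ht), rfl⟩

end DTree

section NaiveSeqTrees

variable [CommSemiring K] {prog : Set (Rule P C)} {db : AnnDB P C K}

theorem DTree.mem_naiveSeq_facts {a : Fact P C} (t : DTree prog db.facts a) {i : ℕ}
    (ht : t.depth ≤ i) : a ∈ (naiveSeq prog db i).facts := by
  induction t generalizing i with
  | leaf a ha => exact facts_subset_naiveSeq_facts i ha
  | node r hr σ ch ih =>
    obtain _ | i := i
    · simp [DTree.depth] at ht
    · exact Or.inl ⟨r, hr, σ, fun j => ih j (DTree.depth_node_le_succ_iff.1 ht j), rfl⟩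

theorem DTree.root_mem_ruleInstances {a : Fact P C} {t : DTree prog db.facts a} {i : ℕ}
    {p : (r : Rule P C) × (Fin r.nvars → C)} (ht : t.depth ≤ i + 1) (h : t.root = some p) :
    p ∈ ruleInstances prog (naiveSeq prog db i).facts a := by
  obtain ⟨r, σ⟩ := p
  obtain ⟨hr, rfl, ch, rfl⟩ := DTree.exists_eq_node_of_root_eq_some h
  exact ⟨hr, fun j => (ch j).mem_naiveSeq_facts (DTree.depth_node_le_succ_iff.1 ht j), rfl⟩

theorem finite_setOf_depth_le (hprog : prog.Finite) (hfin : db.facts.Finite) (i : ℕ) :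
    ∀ a, {t : DTree prog db.facts a | t.depth ≤ i}.Finite := by
  induction i with
  | zero =>
    exact fun a => (DTree.subsingleton_setOf_root_eq_none a).anti
      (fun _ => DTree.root_eq_none_of_depth_le_zero) |>.finite
  | succ i ih =>
    intro a
    refine Set.Finite.of_finite_fibers DTree.root ?_ ?_
    · refine (((ruleInstances_finite hprog (naiveSeq_facts_finite hprog hfin i) a).image
        some).insert none).subset ?_
      rintro _ ⟨t, ht, rfl⟩
      cases h : t.root with
      | none => exact Or.inl rfl
      | some p => exact Or.inr ⟨p, DTree.root_mem_ruleInstances ht h, rfl⟩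
    · rintro (_ | ⟨r, σ⟩) -
      · exact (DTree.subsingleton_setOf_root_eq_none a).anti (fun _ ht => ht.2) |>.finite
      · exact DTree.finite_setOf_root_eq_some (fun j => ih _)

noncomputable def treesUpTo (hprog : prog.Finite) (hfin : db.facts.Finite) (i : ℕ)
    (a : Fact P C) : Finset (DTree prog db.facts a) :=
  (finite_setOf_depth_le hprog hfin i a).toFinset

@[simp]
theorem mem_treesUpTo {hprog : prog.Finite} {hfin : db.facts.Finite} {i : ℕ} {a : Fact P C}
    {t : DTree prog db.facts a} : t ∈ treesUpTo hprog hfin i a ↔ t.depth ≤ i :=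
  Set.Finite.mem_toFinset _

theorem naiveSeq_ann_eq_sum (hprog : prog.Finite) (hfin : db.facts.Finite) (i : ℕ) :
    ∀ a, (naiveSeq prog db i).ann a =
      ∑ t ∈ treesUpTo hprog hfin i a, t.weight db.ann := by
  induction i with
  | zero =>
    intro a
    show db.ann a = _
    rw [← DTree.sum_filter_root_eq_none (treesUpTo hprog hfin 0 a)
      (by simp [DTree.depth]) db.ann (db.ann_eq_zero a),
      Finset.filter_true_of_mem]
    exact fun t ht => DTree.root_eq_none_of_depth_le_zero (mem_treesUpTo.1 ht)
  | succ i ih =>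
    intro a
    have hI := naiveSeq_facts_finite hprog hfin (db := db) i
    have hroot : ∀ t ∈ treesUpTo hprog hfin (i + 1) a,
        t.root ∈ (ruleInstances_finite hprog hI a).toFinset.insertNone := by
      refine fun t ht => Finset.mem_insertNone.2 fun p hp => ?_
      exact (Set.Finite.mem_toFinset _).2
        (DTree.root_mem_ruleInstances (mem_treesUpTo.1 ht) hp)
    show (Tcons prog (naiveSeq prog db i)).ann a + db.ann a = _
    rw [← Finset.sum_fiberwise_of_maps_to hroot, Finset.sum_insertNone,
      DTree.sum_filter_root_eq_none _ (by simp [DTree.depth]) db.ann (db.ann_eq_zero a),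
      add_comm, Tcons_ann, ruleSum_eq_sum hprog hI]
    congr 1
    refine Finset.sum_congr rfl fun ⟨r, σ⟩ hp => ?_
    obtain ⟨hr, -, rfl⟩ := (Set.Finite.mem_toFinset _).1 hp
    rw [DTree.sum_filter_root_eq_some hr _
      (fun j => treesUpTo hprog hfin i _)
      (fun ch => by simp [DTree.depth_node_le_succ_iff]) db.ann]
    exact Finset.prod_congr rfl fun j _ => ih _

end NaiveSeqTrees

theorem statement_4_general (P C K : Type) [OmegaCommSemiring K]
    (prog : Set (Rule P C)) (hprog : prog.Finite)
    (db : AnnDB P C K) (hfin : db.facts.Finite)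
    (α : Fact P C) :
    NE prog db α = AT prog db α := by
  have hmono : Monotone fun i => treesUpTo hprog hfin i α :=
    fun i j hij t ht => mem_treesUpTo.2 ((mem_treesUpTo.1 ht).trans hij)
  have hchain : (fun i => (naiveSeq prog db i).ann α) =
      fun i => ∑ t ∈ treesUpTo hprog hfin i α, t.weight db.ann :=
    funext fun i => naiveSeq_ann_eq_sum hprog hfin i α
  obtain ⟨L, hL⟩ := OmegaCommSemiring.chain_lub _
    fun i j hij => Finset.sum_le_sum_of_subset (f := fun t => t.weight db.ann) (hmono hij)
  have hAT : IsLUB (partialSums Set.univ fun t : DTree prog db.facts α => t.weight db.ann) L :=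
    (isLUB_partialSums_iff hmono (fun _ => Set.subset_univ _)
      fun t _ => ⟨t.depth, mem_treesUpTo.2 le_rfl⟩).2 hL
  rw [NE_eq_of_isLUB (hchain ▸ hL), AT, setSum_eq_of_isLUB hAT]

/-- the naive execution semantics equals the all-tree semantics. -/
theorem statement_4 (P C K : Type) [OmegaCommSemiring K]
    (prog : Set (Rule P C)) (hprog : prog.Finite)
    (db : AnnDB P C K) (hfin : db.facts.Finite)
    (hann : ∀ a ∈ db.facts, db.ann a ≠ 0) (α : Fact P C) :
    NE prog db α = AT prog db α :=
  statement_4_general P C K prog hprog db hfin α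

end Datalog
end
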